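/- Assume ν̄ᵢ > 0 for all i, U positive definite and W positive semidefinite. Let S̄ be a positive semidefinite n×n matrix with S̄ = Π_c(S̄), and set K̄ = −Aᵀ S̄ B N̄ M(S̄)⁻¹. Then for every n×n matrix R with R ⪰ S̄ one has 0 ⪯ Π_c(R) − S̄ ⪯ Σ_{I⊆{1,…,m}} η_I² F_I(K̄) (R − S̄) F_I(K̄)ᵀ, where F_I(K̄) = Aᵀ + K̄ N_I Bᵀ. -/

import Mathlib

open Matrix

/-- The scalar η_I = √(∏_{i∈I} ν̄ᵢ · ∏_{i∉I}(1−ν̄ᵢ)). -/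
noncomputable def eta {m : ℕ} (ν : Fin m → ℝ) (I : Finset (Fin m)) : ℝ :=
  Real.sqrt ((∏ i ∈ I, ν i) * (∏ i ∈ Iᶜ, (1 - ν i)))

/-- The m×m diagonal 0/1 matrix N_I whose i-th diagonal entry is 1 exactly when i ∈ I. -/
def NI {m : ℕ} (I : Finset (Fin m)) : Matrix (Fin m) (Fin m) ℝ :=
  Matrix.diagonal fun i => if i ∈ I then 1 else 0

/-- φ(K,X) = Σ_{I⊆{1,…,m}} η_I² (F_I(K) X F_I(K)ᵀ + V_I(K)), where
F_I(K) = Aᵀ + K N_I Bᵀ and V_I(K) = W + K N_I U N_I Kᵀ. -/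
noncomputable def phi {m n : ℕ} (ν : Fin m → ℝ) (A W : Matrix (Fin n) (Fin n) ℝ)
    (B : Matrix (Fin n) (Fin m) ℝ) (U : Matrix (Fin m) (Fin m) ℝ)
    (K : Matrix (Fin n) (Fin m) ℝ) (X : Matrix (Fin n) (Fin n) ℝ) :
    Matrix (Fin n) (Fin n) ℝ :=
  ∑ I : Finset (Fin m), (eta ν I) ^ 2 •
    ((Aᵀ + K * NI I * Bᵀ) * X * (Aᵀ + K * NI I * Bᵀ)ᵀ + (W + K * NI I * U * NI I * Kᵀ))

/-- M(X) = Σ_{I⊆{1,…,m}} η_I² N_I (U + Bᵀ X B) N_I. -/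
noncomputable def Mop {m n : ℕ} (ν : Fin m → ℝ) (B : Matrix (Fin n) (Fin m) ℝ)
    (U : Matrix (Fin m) (Fin m) ℝ) (X : Matrix (Fin n) (Fin n) ℝ) :
    Matrix (Fin m) (Fin m) ℝ :=
  ∑ I : Finset (Fin m), (eta ν I) ^ 2 • (NI I * (U + Bᵀ * X * B) * NI I)

/-- The modified algebraic Riccati operator
Π_c(X) = Aᵀ X A + W − Aᵀ X B N̄ M(X)⁻¹ N̄ Bᵀ X A, where N̄ = diag(ν̄₁,…,ν̄ₘ). -/
noncomputable def Pic {m n : ℕ} (ν : Fin m → ℝ) (A W : Matrix (Fin n) (Fin n) ℝ)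
    (B : Matrix (Fin n) (Fin m) ℝ) (U : Matrix (Fin m) (Fin m) ℝ)
    (X : Matrix (Fin n) (Fin n) ℝ) : Matrix (Fin n) (Fin n) ℝ :=
  Aᵀ * X * A + W -
    Aᵀ * X * B * Matrix.diagonal ν * (Mop ν B U X)⁻¹ * Matrix.diagonal ν * Bᵀ * X * A

/-!
With `φ(K, X) = Σ_I η_I² (F_I(K) X F_I(K)ᵀ + W + K N_I U N_I Kᵀ)` the closed-loop cost of a gain `K`,
`Σ_I η_I² N_I = N̄` turns `φ(K, X)` into a quadratic in `K`, and completing the square gives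
`φ(K, X) = Π_c(X) + (K − K_X) M(X) (K − K_X)ᵀ` with `K_X = −Aᵀ X B N̄ M(X)⁻¹`. Hence `Π_c(X) ⪯ φ(K, X)`
with equality at `K = K_X`, while `φ(K, ·)` is affine with linear part `Y ↦ Σ_I η_I² F_I(K) Y F_I(K)ᵀ`,
which is monotone. Comparing `Π_c(R) = φ(K_R, R)` with `S̄ = Π_c(S̄) = φ(K̄, S̄)` through the gains
`K_R` and `K̄` gives the lower and the upper bound respectively.
-/

theorem Matrix.PosSemidef.mul_mul_transpose_same {ι κ : Type*} [Fintype ι] [Fintype κ]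
    {P : Matrix ι ι ℝ} (hP : P.PosSemidef) (C : Matrix κ ι ℝ) : (C * P * Cᵀ).PosSemidef := by
  simpa using hP.mul_mul_conjTranspose_same C

theorem Matrix.PosSemidef.transpose_eq {ι : Type*} [Fintype ι] {P : Matrix ι ι ℝ}
    (hP : P.PosSemidef) : Pᵀ = P := by
  simpa using hP.isHermitian.eq

section Eta

variable {m : ℕ} {ν : Fin m → ℝ}

theorem eta_sq (hν : ∀ i, ν i ∈ Set.Icc (0 : ℝ) 1) (I : Finset (Fin m)) :
    eta ν I ^ 2 = (∏ i ∈ I, ν i) * ∏ i ∈ Iᶜ, (1 - ν i) :=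
  Real.sq_sqrt <| mul_nonneg (Finset.prod_nonneg fun i _ => (hν i).1)
    (Finset.prod_nonneg fun i _ => sub_nonneg.2 (hν i).2)

theorem sum_eta_sq (hν : ∀ i, ν i ∈ Set.Icc (0 : ℝ) 1) :
    ∑ I : Finset (Fin m), eta ν I ^ 2 = 1 := by
  simp_rw [eta_sq hν, ← Fintype.prod_add]
  simp

theorem sum_eta_sq_of_mem (hν : ∀ i, ν i ∈ Set.Icc (0 : ℝ) 1) (i : Fin m) :
    ∑ I : Finset (Fin m), (if i ∈ I then eta ν I ^ 2 else 0) = ν i := by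
  calc ∑ I : Finset (Fin m), (if i ∈ I then eta ν I ^ 2 else 0)
      = ∑ I : Finset (Fin m),
          (∏ j ∈ I, ν j) * ∏ j ∈ Iᶜ, (if j = i then 0 else 1 - ν j) := by
        refine Finset.sum_congr rfl fun I _ => ?_
        by_cases hi : i ∈ I
        · rw [if_pos hi, eta_sq hν]
          congr 1
          exact Finset.prod_congr rfl fun j hj =>
            (if_neg fun hji : j = i => Finset.mem_compl.1 hj (hji ▸ hi)).symm
        · rw [if_neg hi, Finset.prod_eq_zero (Finset.mem_compl.2 hi) (by simp), mul_zero]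
    _ = ∏ j, (ν j + if j = i then 0 else 1 - ν j) := (Fintype.prod_add _ _).symm
    _ = ν i := by
        rw [Fintype.prod_eq_single i fun j hj => by rw [if_neg hj]; ring]
        simp

theorem sum_eta_sq_smul_NI (hν : ∀ i, ν i ∈ Set.Icc (0 : ℝ) 1) :
    ∑ I : Finset (Fin m), eta ν I ^ 2 • NI I = diagonal ν := by
  ext i j
  by_cases hij : i = j
  · subst hij
    simp [NI, Matrix.sum_apply, ← sum_eta_sq_of_mem hν i]
  · simp [NI, Matrix.sum_apply, hij]

end Eta

theorem NI_transpose {m : ℕ} (I : Finset (Fin m)) : (NI I)ᵀ = NI I :=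
  diagonal_transpose _

theorem NI_univ {m : ℕ} : NI (Finset.univ : Finset (Fin m)) = 1 := by
  ext i j
  simp [NI, diagonal_apply, one_apply]

noncomputable def optimalGain {m n : ℕ} (ν : Fin m → ℝ) (A : Matrix (Fin n) (Fin n) ℝ)
    (B : Matrix (Fin n) (Fin m) ℝ) (U : Matrix (Fin m) (Fin m) ℝ)
    (X : Matrix (Fin n) (Fin n) ℝ) : Matrix (Fin n) (Fin m) ℝ :=
  -(Aᵀ * X * B * diagonal ν * (Mop ν B U X)⁻¹)

section Riccati

variable {m n : ℕ} {ν : Fin m → ℝ} {A W : Matrix (Fin n) (Fin n) ℝ}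
  {B : Matrix (Fin n) (Fin m) ℝ} {U : Matrix (Fin m) (Fin m) ℝ}

theorem Mop_posDef (hν : ∀ i, ν i ∈ Set.Ioc (0 : ℝ) 1) (hU : U.PosDef)
    {X : Matrix (Fin n) (Fin n) ℝ} (hX : X.PosSemidef) : (Mop ν B U X).PosDef := by
  have hUB : (U + Bᵀ * X * B).PosDef :=
    hU.add_posSemidef (by simpa using hX.conjTranspose_mul_mul_same B)
  have hη : 0 < eta ν Finset.univ ^ 2 := by
    rw [eta_sq fun i => Set.Ioc_subset_Icc_self (hν i)]
    simpa using Finset.prod_pos fun i _ => (hν i).1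
  rw [Mop, ← Finset.add_sum_erase _ _ (Finset.mem_univ Finset.univ), NI_univ, one_mul, mul_one]
  refine (hUB.smul hη).add_posSemidef (posSemidef_sum _ fun I _ => ?_)
  simpa only [NI_transpose] using
    (hUB.posSemidef.mul_mul_transpose_same (NI I)).smul (sq_nonneg (eta ν I))

theorem phi_sub_phi (K : Matrix (Fin n) (Fin m) ℝ) (X Y : Matrix (Fin n) (Fin n) ℝ) :
    phi ν A W B U K X - phi ν A W B U K Y =
      ∑ I : Finset (Fin m), eta ν I ^ 2 •
        ((Aᵀ + K * NI I * Bᵀ) * (X - Y) * (Aᵀ + K * NI I * Bᵀ)ᵀ) := by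
  rw [phi, phi, ← Finset.sum_sub_distrib]
  refine Finset.sum_congr rfl fun I _ => ?_
  rw [← smul_sub, Matrix.mul_sub, Matrix.sub_mul]
  congr 1
  abel

theorem posSemidef_phi_sub_phi (K : Matrix (Fin n) (Fin m) ℝ) {X Y : Matrix (Fin n) (Fin n) ℝ}
    (hXY : (X - Y).PosSemidef) : (phi ν A W B U K X - phi ν A W B U K Y).PosSemidef := by
  rw [phi_sub_phi]
  exact posSemidef_sum _ fun I _ => (hXY.mul_mul_transpose_same _).smul (sq_nonneg _)

theorem phi_eq_quadratic (hν : ∀ i, ν i ∈ Set.Icc (0 : ℝ) 1)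
    (K : Matrix (Fin n) (Fin m) ℝ) (X : Matrix (Fin n) (Fin n) ℝ) :
    phi ν A W B U K X =
      (Aᵀ * X * A + W) + Aᵀ * X * B * diagonal ν * Kᵀ
        + K * diagonal ν * (Bᵀ * X * A) + K * Mop ν B U X * Kᵀ := by
  have hterm : ∀ I : Finset (Fin m),
      eta ν I ^ 2 • ((Aᵀ + K * NI I * Bᵀ) * X * (Aᵀ + K * NI I * Bᵀ)ᵀ
          + (W + K * NI I * U * NI I * Kᵀ))
      = eta ν I ^ 2 • (Aᵀ * X * A + W)
        + Aᵀ * X * B * (eta ν I ^ 2 • NI I) * Kᵀ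
        + K * (eta ν I ^ 2 • NI I) * (Bᵀ * X * A)
        + K * (eta ν I ^ 2 • (NI I * (U + Bᵀ * X * B) * NI I)) * Kᵀ := by
    intro I
    simp only [Matrix.transpose_add, Matrix.transpose_mul, Matrix.transpose_transpose,
      NI_transpose, Matrix.smul_mul, Matrix.mul_smul, ← smul_add]
    congr 1
    simp only [Matrix.mul_add, Matrix.add_mul, Matrix.mul_assoc]
    abel
  rw [phi, Finset.sum_congr rfl fun I _ => hterm I]
  simp only [Finset.sum_add_distrib, ← Finset.sum_smul, ← Matrix.sum_mul, ← Matrix.mul_sum,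
    sum_eta_sq hν, sum_eta_sq_smul_NI hν, one_smul]
  rw [Mop]

theorem phi_eq_Pic_add (hν : ∀ i, ν i ∈ Set.Ioc (0 : ℝ) 1) (hU : U.PosDef)
    {X : Matrix (Fin n) (Fin n) ℝ} (hX : X.PosSemidef) (K : Matrix (Fin n) (Fin m) ℝ) :
    phi ν A W B U K X = Pic ν A W B U X +
      (K - optimalGain ν A B U X) * Mop ν B U X * (K - optimalGain ν A B U X)ᵀ := by
  have hM := Mop_posDef hν hU hX (B := B)
  have hdet : IsUnit (Mop ν B U X).det := isUnit_iff_ne_zero.2 hM.det_pos.ne'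
  have hMinvT : ((Mop ν B U X)⁻¹)ᵀ = (Mop ν B U X)⁻¹ := by
    rw [transpose_nonsing_inv, hM.posSemidef.transpose_eq]
  have hMMinv : ∀ Z : Matrix (Fin m) (Fin n) ℝ, Mop ν B U X * ((Mop ν B U X)⁻¹ * Z) = Z := by
    intro Z; rw [← Matrix.mul_assoc, mul_nonsing_inv _ hdet, Matrix.one_mul]
  have hMinvM : ∀ Z : Matrix (Fin m) (Fin n) ℝ, (Mop ν B U X)⁻¹ * (Mop ν B U X * Z) = Z := by
    intro Z; rw [← Matrix.mul_assoc, nonsing_inv_mul _ hdet, Matrix.one_mul]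
  rw [phi_eq_quadratic (fun i => Set.Ioc_subset_Icc_self (hν i)), Pic, optimalGain,
    sub_neg_eq_add]
  simp only [Matrix.transpose_add, Matrix.transpose_mul, Matrix.transpose_transpose,
    Matrix.diagonal_transpose, hX.transpose_eq, hMinvT, Matrix.add_mul, Matrix.mul_add,
    sub_eq_add_neg, Matrix.mul_assoc, hMMinv, hMinvM]
  abel

theorem phi_optimalGain (hν : ∀ i, ν i ∈ Set.Ioc (0 : ℝ) 1) (hU : U.PosDef)
    {X : Matrix (Fin n) (Fin n) ℝ} (hX : X.PosSemidef) :
    phi ν A W B U (optimalGain ν A B U X) X = Pic ν A W B U X := by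
  simp [phi_eq_Pic_add hν hU hX]

theorem posSemidef_phi_sub_Pic (hν : ∀ i, ν i ∈ Set.Ioc (0 : ℝ) 1) (hU : U.PosDef)
    {X : Matrix (Fin n) (Fin n) ℝ} (hX : X.PosSemidef) (K : Matrix (Fin n) (Fin m) ℝ) :
    (phi ν A W B U K X - Pic ν A W B U X).PosSemidef := by
  rw [phi_eq_Pic_add hν hU hX, add_sub_cancel_left]
  exact (Mop_posDef hν hU hX).posSemidef.mul_mul_transpose_same _

end Riccati

theorem Pic_fixed_point_contraction_general (m n : ℕ)
    (ν : Fin m → ℝ) (hν : ∀ i, ν i ∈ Set.Ioc (0 : ℝ) 1)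
    (A W : Matrix (Fin n) (Fin n) ℝ) (B : Matrix (Fin n) (Fin m) ℝ)
    (U : Matrix (Fin m) (Fin m) ℝ) (hU : U.PosDef)
    (Sbar : Matrix (Fin n) (Fin n) ℝ) (hSbar : Sbar.PosSemidef)
    (hfix : Pic ν A W B U Sbar = Sbar)
    (R : Matrix (Fin n) (Fin n) ℝ) (hR : (R - Sbar).PosSemidef) :
    (Pic ν A W B U R - Sbar).PosSemidef ∧
    ((∑ I : Finset (Fin m), (eta ν I) ^ 2 •
        ((Aᵀ + (-(Aᵀ * Sbar * B * Matrix.diagonal ν * (Mop ν B U Sbar)⁻¹)) * NI I * Bᵀ) *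
          (R - Sbar) *
          (Aᵀ + (-(Aᵀ * Sbar * B * Matrix.diagonal ν * (Mop ν B U Sbar)⁻¹)) * NI I * Bᵀ)ᵀ)) -
      (Pic ν A W B U R - Sbar)).PosSemidef := by
  have hRpsd : R.PosSemidef := by simpa using hSbar.add hR
  have hKbar : phi ν A W B U (-(Aᵀ * Sbar * B * diagonal ν * (Mop ν B U Sbar)⁻¹)) Sbar = Sbar :=
    (phi_optimalGain hν hU hSbar).trans hfix
  constructor
  · set KR := optimalGain ν A B U R
    have hsplit : Pic ν A W B U R - Sbar
        = (phi ν A W B U KR R - phi ν A W B U KR Sbar)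
          + (phi ν A W B U KR Sbar - Pic ν A W B U Sbar) := by
      rw [phi_optimalGain hν hU hRpsd, hfix]; abel
    rw [hsplit]
    exact (posSemidef_phi_sub_phi KR hR).add (posSemidef_phi_sub_Pic hν hU hSbar KR)
  · rw [← phi_sub_phi, hKbar, sub_sub_sub_cancel_right]
    exact posSemidef_phi_sub_Pic hν hU hRpsd _

/-- let S̄ ⪰ 0 be a fixed point of Π_c and K̄ = −Aᵀ S̄ B N̄ M(S̄)⁻¹.
Then for every R ⪰ S̄:
0 ⪯ Π_c(R) − S̄ ⪯ Σ_{I⊆{1,…,m}} η_I² F_I(K̄) (R − S̄) F_I(K̄)ᵀ,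
where F_I(K̄) = Aᵀ + K̄ N_I Bᵀ. -/
theorem Pic_fixed_point_contraction (m n : ℕ) (hm : 0 < m) (hn : 0 < n)
    (ν : Fin m → ℝ) (hν : ∀ i, ν i ∈ Set.Ioc (0 : ℝ) 1)
    (A W : Matrix (Fin n) (Fin n) ℝ) (B : Matrix (Fin n) (Fin m) ℝ)
    (U : Matrix (Fin m) (Fin m) ℝ) (hW : W.PosSemidef) (hU : U.PosDef)
    (Sbar : Matrix (Fin n) (Fin n) ℝ) (hSbar : Sbar.PosSemidef)
    (hfix : Pic ν A W B U Sbar = Sbar)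
    (R : Matrix (Fin n) (Fin n) ℝ) (hR : (R - Sbar).PosSemidef) :
    (Pic ν A W B U R - Sbar).PosSemidef ∧
    ((∑ I : Finset (Fin m), (eta ν I) ^ 2 •
        ((Aᵀ + (-(Aᵀ * Sbar * B * Matrix.diagonal ν * (Mop ν B U Sbar)⁻¹)) * NI I * Bᵀ) *
          (R - Sbar) *
          (Aᵀ + (-(Aᵀ * Sbar * B * Matrix.diagonal ν * (Mop ν B U Sbar)⁻¹)) * NI I * Bᵀ)ᵀ)) -
      (Pic ν A W B U R - Sbar)).PosSemidef :=
  Pic_fixed_point_contraction_general m n ν hν A W B U hU Sbar hSbar hfix R hR
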